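/- arXiv:1605.03949 — 2 statements merged into one kernel-verified Lean document; each statement's English description precedes it below -/
import Mathlib

section
/- Let 0 < ε, δ, r < 1, let x, y ≥ 0 and 0 ≤ z ≤ z' with z' ≥ max(x, y, z), and let A, B be subsets of a finite universe U with S_{x,y,z,z'}(A,B) > 0. Fix k ∈ ℕ and let (X_i)_{i∈U} be independent Bernoulli random variables with Pr[X_i = 1] = 2^{-k}, S_k = {i : X_i = 1}, A_k = A ∩ S_k, B_k = B ∩ S_k. If 2^k ≤ (ε/5)²·δ·r·N(A,B) / max{x+y, z'+y, z+y}, then Pr[ S_{x,y,z,z'}(A_k, B_k) ≥ S_{x,y,z,z'}(A,B) / (δ·(1 − (ε/5)·√r)) ] ≤ 2δ, where S_{x,y,z,z'}(A_k, B_k) is the rational set similarity of A_k and B_k computed with respect to the universe S_k. -/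
/-!
Write `p = 2^{-k}`, `t = (ε/5)·√r`. The sampled numerator and denominator are weighted sums
`∑ wᵢ Xᵢ` of independent Bernoulli(`p`) variables, with means `p·N` and `p·D`. By Markov the
numerator reaches `p·N/δ` with probability at most `δ`. The denominator has variance at most
`p·(z'+y)·D`, and the bound on `2^k` makes this at most `δ·(t·p·D)²`, so by Chebyshev it leaves
`(1 ± t)·p·D` with probability at most `δ`. Outside both events the sampled similarity is below
`(p·N/δ) / ((1-t)·p·D) = S(A,B) / (δ·(1-t))`.
-/

open MeasureTheory ProbabilityTheory

/-- The rational set similarity of `A, B` computed with respect to the universe `V`: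
`N/D` with `N = x|A∩B| + y|V∖(A∪B)| + z|A△B|`, `D = x|A∩B| + y|V∖(A∪B)| + z'|A△B|`,
and value `1` when `D = 0`. -/
noncomputable def ratSimOn {α : Type*} [DecidableEq α]
    (x y z z' : ℝ) (V A B : Finset α) : ℝ :=
  if x * ((A ∩ B).card : ℝ) + y * ((V \ (A ∪ B)).card : ℝ)
      + z' * ((symmDiff A B).card : ℝ) = 0 then 1
  else (x * ((A ∩ B).card : ℝ) + y * ((V \ (A ∪ B)).card : ℝ)
      + z * ((symmDiff A B).card : ℝ))
    / (x * ((A ∩ B).card : ℝ) + y * ((V \ (A ∪ B)).card : ℝ)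
      + z' * ((symmDiff A B).card : ℝ))

open Finset

section Combinatorics

variable {α : Type*} [DecidableEq α]

/-- `N(A,B)` for `w = z` and `D(A,B)` for `w = z'`. -/
noncomputable def ratSimForm (x y w : ℝ) (V A B : Finset α) : ℝ :=
  x * #(A ∩ B) + y * #(V \ (A ∪ B)) + w * #(symmDiff A B)

def ratSimWeight (x y w : ℝ) (A B : Finset α) (i : α) : ℝ :=
  if i ∈ A ∩ B then x else if i ∈ A ∪ B then w else y

theorem ratSimOn_eq_ite (x y z z' : ℝ) (V A B : Finset α) :
    ratSimOn x y z z' V A B = if ratSimForm x y z' V A B = 0 then 1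
      else ratSimForm x y z V A B / ratSimForm x y z' V A B :=
  rfl

theorem ratSimForm_mono {x y w w' : ℝ} (h : w ≤ w') (V A B : Finset α) :
    ratSimForm x y w V A B ≤ ratSimForm x y w' V A B := by
  unfold ratSimForm
  gcongr

theorem sum_ratSimWeight (x y w : ℝ) (A B S : Finset α) :
    ∑ i ∈ S, ratSimWeight x y w A B i = ratSimForm x y w S (A ∩ S) (B ∩ S) := by
  simp only [ratSimWeight, ratSimForm, sum_ite, sum_const, nsmul_eq_mul, filter_filter]
  have hAB : (S.filter fun i => i ∈ A ∩ B) = A ∩ S ∩ (B ∩ S) := by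
    ext i; simp only [mem_filter, mem_inter]; tauto
  have hout : (S.filter fun i => i ∉ A ∩ B ∧ i ∉ A ∪ B) = S \ (A ∩ S ∪ B ∩ S) := by
    ext i; simp only [mem_filter, mem_inter, mem_union, mem_sdiff]; tauto
  have hsymm : (S.filter fun i => i ∉ A ∩ B ∧ i ∈ A ∪ B) = symmDiff (A ∩ S) (B ∩ S) := by
    ext i; simp only [mem_filter, mem_inter, mem_union, mem_symmDiff]; tauto
  rw [hAB, hout, hsymm]
  ring

theorem ratSimWeight_nonneg {x y w : ℝ} (hx : 0 ≤ x) (hy : 0 ≤ y) (hw : 0 ≤ w)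
    (A B : Finset α) (i : α) : 0 ≤ ratSimWeight x y w A B i := by
  unfold ratSimWeight; split_ifs <;> assumption

theorem ratSimWeight_mono {x y w w' : ℝ} (h : w ≤ w') (A B : Finset α) (i : α) :
    ratSimWeight x y w A B i ≤ ratSimWeight x y w' A B i := by
  unfold ratSimWeight; split_ifs <;> first | exact le_rfl | exact h

theorem ratSimWeight_le {x y w c : ℝ} (hx : x ≤ c) (hy : y ≤ c) (hw : w ≤ c)
    (A B : Finset α) (i : α) : ratSimWeight x y w A B i ≤ c := by
  unfold ratSimWeight; split_ifs <;> assumption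

theorem sum_mul_eq_sum_of_zero_or_one [Fintype α] {X : α → ℝ} {S : Finset α}
    (h01 : ∀ i, X i = 0 ∨ X i = 1) (hS : ∀ i, i ∈ S ↔ X i = 1) (c : α → ℝ) :
    ∑ i, c i * X i = ∑ i ∈ S, c i := by
  have hX : ∀ i, c i * X i = if i ∈ S then c i else 0 := fun i => by
    rcases h01 i with h | h <;> simp [hS, h]
  simp only [hX, sum_ite_mem, univ_inter]

theorem ratSimForm_univ [Fintype α] (x y w : ℝ) (A B : Finset α) :
    ratSimForm x y w univ A B = ∑ i, ratSimWeight x y w A B i := by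
  rw [sum_ratSimWeight, inter_univ, inter_univ]

theorem ratSimOn_inter_eq [Fintype α] {X : α → ℝ} {S : Finset α}
    (h01 : ∀ i, X i = 0 ∨ X i = 1) (hS : ∀ i, i ∈ S ↔ X i = 1) (x y z z' : ℝ) (A B : Finset α) :
    ratSimOn x y z z' S (A ∩ S) (B ∩ S) =
      if ∑ i, ratSimWeight x y z' A B i * X i = 0 then 1
      else (∑ i, ratSimWeight x y z A B i * X i) / ∑ i, ratSimWeight x y z' A B i * X i := by
  simp only [ratSimOn_eq_ite, sum_mul_eq_sum_of_zero_or_one h01 hS, sum_ratSimWeight]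

end Combinatorics

theorem div_lt_div_div_mul_of_lt_of_abs_sub_lt {a b A B δ t : ℝ} (ha : 0 ≤ a) (hB : 0 < B)
    (hδ : 0 < δ) (ht : t < 1) (hA : a < A / δ) (hb : |b - B| < t * B) :
    a / b < A / B / (δ * (1 - t)) := by
  have hbB : (1 - t) * B < b := by linarith [abs_lt.1 hb]
  have htB : 0 < (1 - t) * B := mul_pos (sub_pos.2 ht) hB
  calc a / b ≤ a / ((1 - t) * B) := div_le_div_of_nonneg_left ha htB hbB.le
    _ < A / δ / ((1 - t) * B) := div_lt_div_of_pos_right hA htB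
    _ = A / B / (δ * (1 - t)) := by field_simp

theorem pos_and_le_of_two_pow_le_div {a N M : ℝ} {k : ℕ} (ha : 0 < a) (hM : 0 ≤ M)
    (hk : (2 : ℝ) ^ k ≤ a * N / M) : 0 < N ∧ M ≤ a * N * (1 / 2) ^ k := by
  have hq : 0 < a * N / M := (by positivity : (0 : ℝ) < 2 ^ k).trans_le hk
  have hMpos : 0 < M := hM.lt_of_ne (by rintro rfl; simp at hq)
  refine ⟨pos_of_mul_pos_right ((div_pos_iff_of_pos_right hMpos).1 hq) ha.le, ?_⟩
  rw [le_div_iff₀ hMpos] at hk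
  calc M = 2 ^ k * M * (1 / 2) ^ k := by rw [mul_comm, ← mul_assoc, ← mul_pow]; norm_num
    _ ≤ a * N * (1 / 2) ^ k := by gcongr

section Probability

variable {Ω : Type*} [MeasurableSpace Ω] {μ : Measure Ω}

theorem integral_eq_measureReal_of_zero_or_one {X : Ω → ℝ} (hX : Measurable X)
    (h01 : ∀ ω, X ω = 0 ∨ X ω = 1) : μ[X] = μ.real {ω | X ω = 1} := by
  rw [← integral_indicator_one (s := {ω | X ω = 1}) (hX (measurableSet_singleton 1))]
  congr 1 with ω
  rcases h01 ω with h | h <;> simp [h]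

theorem memLp_of_zero_or_one [IsFiniteMeasure μ] {X : Ω → ℝ} (hX : Measurable X)
    (h01 : ∀ ω, X ω = 0 ∨ X ω = 1) (p : ENNReal) : MemLp X p μ :=
  MemLp.of_bound hX.aestronglyMeasurable 1 <| ae_of_all _ fun ω => by
    rcases h01 ω with h | h <;> simp [h]

theorem variance_le_integral_of_zero_or_one [IsProbabilityMeasure μ] {X : Ω → ℝ}
    (hX : Measurable X) (h01 : ∀ ω, X ω = 0 ∨ X ω = 1) : variance X μ ≤ μ[X] := by
  have hsq : X ^ 2 = X := funext fun ω => by rcases h01 ω with h | h <;> simp [h]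
  simpa only [hsq] using variance_le_expectation_sq (μ := μ) hX.aestronglyMeasurable

theorem integral_sum_mul {ι : Type*} [Fintype ι] {X : ι → Ω → ℝ}
    (hX : ∀ i, Integrable (X i) μ) (w : ι → ℝ) :
    ∫ ω, ∑ i, w i * X i ω ∂μ = ∑ i, w i * μ[X i] := by
  rw [integral_finsetSum _ fun i _ => (hX i).const_mul (w i)]
  simp_rw [integral_const_mul]

theorem variance_sum_mul_le [IsProbabilityMeasure μ] {ι : Type*} [Fintype ι] {X : ι → Ω → ℝ}
    (hX : ∀ i, MemLp (X i) 2 μ) (hind : iIndepFun X μ) (hvar : ∀ i, variance (X i) μ ≤ μ[X i])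
    {w : ι → ℝ} {c : ℝ} (hw0 : ∀ i, 0 ≤ w i) (hwc : ∀ i, w i ≤ c) :
    variance (fun ω => ∑ i, w i * X i ω) μ ≤ c * ∑ i, w i * μ[X i] := by
  have hsum : (fun ω => ∑ i, w i * X i ω) = ∑ i, fun ω => w i * X i ω := by
    ext ω; simp only [Finset.sum_apply]
  rw [hsum, IndepFun.variance_sum (fun i _ => (hX i).const_mul (w i))
    (fun i _ j _ hij => (hind.indepFun hij).comp (measurable_const_mul _) (measurable_const_mul _)),
    mul_sum]
  refine sum_le_sum fun i _ => ?_
  have hEX : 0 ≤ μ[X i] := (variance_nonneg (X i) μ).trans (hvar i)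
  rw [variance_const_mul]
  calc w i ^ 2 * variance (X i) μ ≤ w i ^ 2 * μ[X i] := by gcongr; exact hvar i
    _ ≤ c * (w i * μ[X i]) := by
      nlinarith [mul_nonneg (mul_nonneg (sub_nonneg.2 (hwc i)) (hw0 i)) hEX]

theorem measure_ge_integral_div_le [IsFiniteMeasure μ] {f : Ω → ℝ} (hf0 : ∀ ω, 0 ≤ f ω)
    (hf : Integrable f μ) (hEf : 0 < μ[f]) {δ : ℝ} (hδ : 0 < δ) :
    μ {ω | μ[f] / δ ≤ f ω} ≤ ENNReal.ofReal δ := by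
  have hmarkov := mul_meas_ge_le_integral_of_nonneg (ae_of_all _ hf0) hf (μ[f] / δ)
  rw [← ofReal_measureReal]
  refine ENNReal.ofReal_le_ofReal ?_
  rwa [div_mul_eq_mul_div, div_le_iff₀ hδ, mul_le_mul_iff_right₀ hEf] at hmarkov

theorem measure_ratio_overshoot_le [IsProbabilityMeasure μ] {f g R : Ω → ℝ} {δ t : ℝ}
    (hf0 : ∀ ω, 0 ≤ f ω) (hf : Integrable f μ) (hg : MemLp g 2 μ) (hEf : 0 < μ[f])
    (hEg : 0 < μ[g]) (hδ : 0 < δ) (ht0 : 0 < t) (ht1 : t < 1)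
    (hvar : variance g μ ≤ δ * (t * μ[g]) ^ 2) (hR : ∀ ω, g ω ≠ 0 → R ω = f ω / g ω) :
    μ {ω | μ[f] / μ[g] / (δ * (1 - t)) ≤ R ω} ≤ ENNReal.ofReal (2 * δ) := by
  have hsub : {ω | μ[f] / μ[g] / (δ * (1 - t)) ≤ R ω} ⊆
      {ω | t * μ[g] ≤ |g ω - μ[g]|} ∪ {ω | μ[f] / δ ≤ f ω} := by
    intro ω hω
    by_contra hout
    simp only [Set.mem_union, Set.mem_ofPred_eq, not_or, not_le] at hout
    have hgpos : 0 < g ω := by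
      nlinarith [abs_lt.1 hout.1, mul_pos (sub_pos.2 ht1) hEg]
    rw [Set.mem_ofPred_eq, hR ω hgpos.ne'] at hω
    exact hω.not_gt (div_lt_div_div_mul_of_lt_of_abs_sub_lt (hf0 ω) hEg hδ ht1 hout.2 hout.1)
  have hchebyshev : μ {ω | t * μ[g] ≤ |g ω - μ[g]|} ≤ ENNReal.ofReal δ :=
    (meas_ge_le_variance_div_sq hg (mul_pos ht0 hEg)).trans <|
      ENNReal.ofReal_le_ofReal <| (div_le_iff₀ (by positivity)).2 hvar
  calc _ ≤ μ ({ω | t * μ[g] ≤ |g ω - μ[g]|} ∪ {ω | μ[f] / δ ≤ f ω}) := measure_mono hsub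
    _ ≤ ENNReal.ofReal δ + ENNReal.ofReal δ := (measure_union_le _ _).trans <|
      add_le_add hchebyshev (measure_ge_integral_div_le hf0 hf hEf hδ)
    _ = ENNReal.ofReal (2 * δ) := by rw [← ENNReal.ofReal_add hδ.le hδ.le, two_mul]

theorem measure_weighted_ratio_overshoot_le [IsProbabilityMeasure μ] {ι : Type*} [Fintype ι]
    {X : ι → Ω → ℝ} (hmeas : ∀ i, Measurable (X i)) (hind : iIndepFun X μ)
    (h01 : ∀ i ω, X i ω = 0 ∨ X i ω = 1) {p : ℝ} (hp : 0 < p) (hEX : ∀ i, μ[X i] = p)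
    {u v : ι → ℝ} {c δ t : ℝ} (hu : ∀ i, 0 ≤ u i) (huv : ∀ i, u i ≤ v i) (hvc : ∀ i, v i ≤ c)
    (hsum : 0 < ∑ i, u i) (hδ : 0 < δ) (ht0 : 0 < t) (ht1 : t < 1)
    (hc : c ≤ δ * t ^ 2 * p * ∑ i, u i) {R : Ω → ℝ}
    (hR : ∀ ω, ∑ i, v i * X i ω ≠ 0 → R ω = (∑ i, u i * X i ω) / ∑ i, v i * X i ω) :
    μ {ω | (∑ i, u i) / (∑ i, v i) / (δ * (1 - t)) ≤ R ω} ≤ ENNReal.ofReal (2 * δ) := by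
  have hXint : ∀ i, Integrable (X i) μ :=
    fun i => memLp_one_iff_integrable.1 (memLp_of_zero_or_one (hmeas i) (h01 i) 1)
  have hE : ∀ w : ι → ℝ, ∫ ω, ∑ i, w i * X i ω ∂μ = p * ∑ i, w i := fun w => by
    rw [integral_sum_mul hXint, mul_sum]
    simp only [hEX, mul_comm]
  have hsumuv : ∑ i, u i ≤ ∑ i, v i := sum_le_sum fun i _ => huv i
  have hsumv : 0 < ∑ i, v i := hsum.trans_le hsumuv
  have hvar : variance (fun ω => ∑ i, v i * X i ω) μ ≤ c * (p * ∑ i, v i) := by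
    rw [← hE]
    refine (variance_sum_mul_le (fun i => memLp_of_zero_or_one (hmeas i) (h01 i) 2) hind
      (fun i => variance_le_integral_of_zero_or_one (hmeas i) (h01 i))
      (fun i => (hu i).trans (huv i)) hvc).trans_eq ?_
    rw [integral_sum_mul hXint]
  have hratio := measure_ratio_overshoot_le (f := fun ω => ∑ i, u i * X i ω)
    (g := fun ω => ∑ i, v i * X i ω)
    (fun ω => sum_nonneg fun i _ => mul_nonneg (hu i) (by rcases h01 i ω with h | h <;> simp [h]))
    (integrable_finsetSum _ fun i _ => (hXint i).const_mul (u i))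
    (memLp_finsetSum _ fun i _ => (memLp_of_zero_or_one (hmeas i) (h01 i) 2).const_mul (v i))
    (by rw [hE]; exact mul_pos hp hsum) (by rw [hE]; exact mul_pos hp hsumv) hδ ht0 ht1 ?_ hR
  · simpa only [hE, mul_div_mul_left _ _ hp.ne'] using hratio
  · have hcv : c ≤ δ * t ^ 2 * p * ∑ i, v i := hc.trans (by gcongr)
    rw [hE]
    calc _ ≤ c * (p * ∑ i, v i) := hvar
      _ ≤ δ * t ^ 2 * p * (∑ i, v i) * (p * ∑ i, v i) := by gcongr
      _ = δ * (t * (p * ∑ i, v i)) ^ 2 := by ring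

end Probability

theorem sampled_ratSim_overshoot_general
    (ε δ r : ℝ) (hε : 0 < ε) (hε1 : ε < 1) (hδ : 0 < δ)
    (hr : 0 < r) (hr1 : r < 1)
    (x y z z' : ℝ) (hx : 0 ≤ x) (hy : 0 ≤ y) (hz : 0 ≤ z) (hzz' : z ≤ z')
    (hmax : max (max x y) z ≤ z')
    {U : Type*} [Fintype U] [DecidableEq U] (A B : Finset U)
    (k : ℕ)
    {Ω : Type*} [MeasurableSpace Ω] (μ : Measure Ω) [IsProbabilityMeasure μ]
    (X : U → Ω → ℝ) (hmeas : ∀ i, Measurable (X i))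
    (hindep : iIndepFun X μ)
    (h01 : ∀ i ω, X i ω = 0 ∨ X i ω = 1)
    (hq : ∀ i, μ {ω | X i ω = 1} = ENNReal.ofReal ((1 / 2 : ℝ) ^ k))
    (Sk : Ω → Finset U) (hSk : ∀ ω i, i ∈ Sk ω ↔ X i ω = 1)
    (hk : (2 : ℝ) ^ k ≤ (ε / 5) ^ 2 * δ * r
        * (x * ((A ∩ B).card : ℝ) + y * (((A ∪ B)ᶜ : Finset U).card : ℝ)
            + z * ((symmDiff A B).card : ℝ))
        / max (max (x + y) (z' + y)) (z + y)) :
    μ {ω | ratSimOn x y z z' (Finset.univ : Finset U) A B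
            / (δ * (1 - ε / 5 * Real.sqrt r))
          ≤ ratSimOn x y z z' (Sk ω) (A ∩ Sk ω) (B ∩ Sk ω)}
      ≤ ENNReal.ofReal (2 * δ) := by
  have hsr : Real.sqrt r < 1 := (Real.sqrt_lt' one_pos).2 (by rwa [one_pow])
  have ht1 : ε / 5 * Real.sqrt r < 1 := by nlinarith [Real.sqrt_nonneg r]
  have ht2 : (ε / 5 * Real.sqrt r) ^ 2 = (ε / 5) ^ 2 * r := by
    rw [mul_pow, Real.sq_sqrt hr.le]
  have hz' : 0 ≤ z' := hz.trans hzz'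
  have hxz' : x ≤ z' := (le_max_left _ _).trans ((le_max_left _ _).trans hmax)
  have hM : z' + y ≤ max (max (x + y) (z' + y)) (z + y) :=
    (le_max_right _ _).trans (le_max_left _ _)
  obtain ⟨hN, hMN⟩ := pos_and_le_of_two_pow_le_div (N := ratSimForm x y z univ A B)
    (by positivity) ((add_nonneg hz' hy).trans hM) hk
  have hS : ratSimOn x y z z' univ A B
      = (∑ i, ratSimWeight x y z A B i) / ∑ i, ratSimWeight x y z' A B i := by
    rw [ratSimOn_eq_ite, if_neg (hN.trans_le (ratSimForm_mono hzz' _ _ _)).ne',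
      ratSimForm_univ, ratSimForm_univ]
  rw [hS]
  refine measure_weighted_ratio_overshoot_le hmeas hindep h01 (p := (1 / 2) ^ k) (by positivity)
    (fun i => by rw [integral_eq_measureReal_of_zero_or_one (hmeas i) (h01 i), measureReal_def,
      hq i, ENNReal.toReal_ofReal (by positivity)])
    (ratSimWeight_nonneg hx hy hz A B) (ratSimWeight_mono hzz' A B)
    (ratSimWeight_le (by linarith : x ≤ z' + y) (le_add_of_nonneg_left hz')
      (le_add_of_nonneg_right hy) A B) (by rwa [← ratSimForm_univ])
    hδ (by positivity) ht1 ?_ (fun ω hω => by rw [ratSimOn_inter_eq (h01 · ω) (hSk ω), if_neg hω])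
  calc z' + y ≤ _ := hM
    _ ≤ _ := hMN
    _ = δ * (ε / 5 * Real.sqrt r) ^ 2 * (1 / 2) ^ k * ∑ i, ratSimWeight x y z A B i := by
      rw [ht2, ← ratSimForm_univ]; ring

/-- under subsampling with independent Bernoulli(`2^{-k}`) variables,
if `S_{x,y,z,z'}(A,B) > 0` and `2^k ≤ (ε/5)²·δ·r·N(A,B) / max{x+y, z'+y, z+y}`, then
the probability that the sampled similarity exceeds `S(A,B) / (δ·(1 - (ε/5)·√r))`
is at most `2δ`. -/
theorem sampled_ratSim_overshoot
    (ε δ r : ℝ) (hε : 0 < ε) (hε1 : ε < 1) (hδ : 0 < δ) (hδ1 : δ < 1)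
    (hr : 0 < r) (hr1 : r < 1)
    (x y z z' : ℝ) (hx : 0 ≤ x) (hy : 0 ≤ y) (hz : 0 ≤ z) (hzz' : z ≤ z')
    (hmax : max (max x y) z ≤ z')
    {U : Type*} [Fintype U] [DecidableEq U] (A B : Finset U)
    (hsim : 0 < ratSimOn x y z z' (Finset.univ : Finset U) A B)
    (k : ℕ)
    {Ω : Type*} [MeasurableSpace Ω] (μ : Measure Ω) [IsProbabilityMeasure μ]
    (X : U → Ω → ℝ) (hmeas : ∀ i, Measurable (X i))
    (hindep : iIndepFun X μ)
    (h01 : ∀ i ω, X i ω = 0 ∨ X i ω = 1)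
    (hq : ∀ i, μ {ω | X i ω = 1} = ENNReal.ofReal ((1 / 2 : ℝ) ^ k))
    (Sk : Ω → Finset U) (hSk : ∀ ω i, i ∈ Sk ω ↔ X i ω = 1)
    (hk : (2 : ℝ) ^ k ≤ (ε / 5) ^ 2 * δ * r
        * (x * ((A ∩ B).card : ℝ) + y * (((A ∪ B)ᶜ : Finset U).card : ℝ)
            + z * ((symmDiff A B).card : ℝ))
        / max (max (x + y) (z' + y)) (z + y)) :
    μ {ω | ratSimOn x y z z' (Finset.univ : Finset U) A B
            / (δ * (1 - ε / 5 * Real.sqrt r))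
          ≤ ratSimOn x y z z' (Sk ω) (A ∩ Sk ω) (B ∩ Sk ω)}
      ≤ ENNReal.ofReal (2 * δ) :=
  sampled_ratSim_overshoot_general ε δ r hε hε1 hδ hr hr1 x y z z' hx hy hz hzz' hmax A B k μ X
    hmeas hindep h01 hq Sk hSk hk
end

section
/- Let 0 < ε, δ, r < 1 and let A, B be subsets of a finite universe U with |U| = d whose Hamming similarity H(A,B) = 1 − |A△B|/d satisfies H(A,B) ≥ r. Fix k ∈ ℕ and let (X_i)_{i∈U} be independent Bernoulli random variables with Pr[X_i = 1] = 2^{-k}, S_k = {i : X_i = 1}, A_k = A ∩ S_k, B_k = B ∩ S_k. If 2^k ≤ (ε/5)²·δ·r·d / 2, then with probability at least 1 − 2δ, (1−ε)·H(A,B) ≤ H_k(A_k, B_k) ≤ (1+ε)·H(A,B), where H_k(A_k,B_k) = 1 − |A_k△B_k|/|S_k| (taken to be 1 if S_k = ∅). -/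
/-
Write `C = (A △ B)ᶜ` for the coordinates on which `A` and `B` agree, so that `H(A,B) = |C|/d`
and the sampled similarity is `|C ∩ S_k| / |S_k|`. Both counts are sums of independent
Bernoulli(`p`) variables, `p = 2^{-k}`, with means `p|C|` and `p d` and variances at most the
means. By Chebyshev a count with mean `p n` is within a factor `1 ± ε/5` of it except with
probability at most `25/(ε² p n)`, which the hypotheses `|C| ≥ r d` and
`2^k ≤ (ε/5)² δ r d / 2` make at most `δ/2`. Off the two bad events the ratio lies between `(1 - ε/5)/(1 + ε/5) ≥ 1 - ε` and
`(1 + ε/5)/(1 - ε/5) ≤ 1 + ε` times `H(A,B)`.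
-/

open MeasureTheory ProbabilityTheory

/-- The Hamming similarity of `A, B` with respect to a universe `V`:
`1 - |A△B| / |V|`, with the convention that it equals `1` when `V = ∅`. -/
noncomputable def hammingSimOn {α : Type*} [DecidableEq α] (V A B : Finset α) : ℝ :=
  if V = ∅ then 1 else 1 - ((symmDiff A B).card : ℝ) / (V.card : ℝ)

open scoped Finset

section Hamming

variable {α : Type*} [DecidableEq α]

theorem hammingSimOn_inter_inter {V : Finset α} (hV : V.Nonempty) (A B : Finset α) :
    hammingSimOn V (A ∩ V) (B ∩ V) = #(V \ symmDiff A B) / #V := by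
  have hV0 : (#V : ℝ) ≠ 0 := by exact_mod_cast hV.card_pos.ne'
  have hsplit : (#(V \ symmDiff A B) : ℝ) + #(V ∩ symmDiff A B) = #V := by
    exact_mod_cast Finset.card_sdiff_add_card_inter V (symmDiff A B)
  rw [hammingSimOn, if_neg hV.ne_empty, ← Finset.inf_eq_inter, ← Finset.inf_eq_inter,
    ← inf_symmDiff_distrib_right, Finset.inf_eq_inter, Finset.inter_comm]
  field_simp
  linarith

theorem hammingSimOn_univ [Fintype α] [Nonempty α] (A B : Finset α) :
    hammingSimOn Finset.univ A B = #(symmDiff A B)ᶜ / Fintype.card α := by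
  have h := hammingSimOn_inter_inter (Finset.univ_nonempty (α := α)) A B
  rwa [Finset.inter_univ, Finset.inter_univ, Finset.card_univ,
    ← Finset.compl_eq_univ_sdiff] at h

end Hamming

theorem pos_of_abs_sub_lt_mul {η b y : ℝ} (hb : 0 < b) (hη : η ≤ 1) (hy : |y - b| < η * b) :
    0 < y := by
  have := (abs_lt.mp hy).1
  nlinarith

theorem div_mem_Icc_of_abs_sub_lt_mul {η a b x y : ℝ} (ha : 0 < a) (hb : 0 < b) (hη : η < 1)
    (hx : |x - a| < η * a) (hy : |y - b| < η * b) :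
    x / y ∈ Set.Icc ((1 - η) / (1 + η) * (a / b)) ((1 + η) / (1 - η) * (a / b)) := by
  have hy0 : 0 < y := pos_of_abs_sub_lt_mul hb hη.le hy
  obtain ⟨hxl, hxu⟩ := abs_lt.mp hx
  obtain ⟨hyl, hyu⟩ := abs_lt.mp hy
  have hη0 : 0 < η := by nlinarith [abs_nonneg (x - a)]
  have hlo_a : 0 < (1 - η) * a := mul_pos (by linarith) ha
  have hhi_b : 0 < (1 + η) * b := mul_pos (by linarith) hb
  constructor
  · rw [div_mul_div_comm, div_le_div_iff₀ hhi_b hy0]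
    nlinarith [mul_lt_mul_of_pos_left (by linarith : y < (1 + η) * b) hlo_a,
      mul_lt_mul_of_pos_right (by linarith : (1 - η) * a < x) hhi_b]
  · rw [div_mul_div_comm, div_le_div_iff₀ hy0 (mul_pos (by linarith) hb)]
    nlinarith [mul_lt_mul_of_pos_left (by linarith : (1 - η) * b < y)
        (by linarith : 0 < (1 + η) * a),
      mul_lt_mul_of_pos_right (by linarith : x < (1 + η) * a)
        (mul_pos (by linarith) hb : 0 < (1 - η) * b)]

theorem div_mem_Icc_of_abs_sub_lt_div_five {ε a b x y : ℝ} (hε : 0 < ε) (hε3 : ε ≤ 3)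
    (ha : 0 < a) (hb : 0 < b) (hx : |x - a| < ε / 5 * a) (hy : |y - b| < ε / 5 * b) :
    x / y ∈ Set.Icc ((1 - ε) * (a / b)) ((1 + ε) * (a / b)) := by
  obtain ⟨hlo, hhi⟩ := div_mem_Icc_of_abs_sub_lt_mul ha hb (by linarith) hx hy
  have hab : 0 ≤ a / b := by positivity
  constructor
  · refine le_trans (mul_le_mul_of_nonneg_right ?_ hab) hlo
    rw [le_div_iff₀ (by linarith)]
    nlinarith
  · refine hhi.trans (mul_le_mul_of_nonneg_right ?_ hab)
    rw [div_le_iff₀ (by linarith)]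
    nlinarith

theorem hammingSimOn_inter_mem_Icc_of_abs_sub_lt {α : Type*} [Fintype α] [DecidableEq α]
    {A B S : Finset α} {ε p : ℝ} (hε : 0 < ε) (hε3 : ε ≤ 3) (hp : 0 < p)
    (hC : 0 < #(symmDiff A B)ᶜ)
    (hCS : |(#((symmDiff A B)ᶜ ∩ S) : ℝ) - p * #(symmDiff A B)ᶜ|
      < ε / 5 * (p * #(symmDiff A B)ᶜ))
    (hS : |(#S : ℝ) - p * Fintype.card α| < ε / 5 * (p * Fintype.card α)) :
    hammingSimOn S (A ∩ S) (B ∩ S) ∈ Set.Icc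
      ((1 - ε) * hammingSimOn Finset.univ A B) ((1 + ε) * hammingSimOn Finset.univ A B) := by
  have hcard : 0 < Fintype.card α := hC.trans_le (Finset.card_le_univ _)
  have : Nonempty α := Fintype.card_pos_iff.mp hcard
  have hS0 : (0 : ℝ) < #S :=
    pos_of_abs_sub_lt_mul (mul_pos hp (by exact_mod_cast hcard)) (by linarith) hS
  have hsample : hammingSimOn S (A ∩ S) (B ∩ S) = #((symmDiff A B)ᶜ ∩ S) / #S := by
    rw [hammingSimOn_inter_inter (Finset.card_pos.mp (by exact_mod_cast hS0)) A B,
      Finset.sdiff_eq_inter_compl, Finset.inter_comm]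
  rw [hsample, hammingSimOn_univ, ← mul_div_mul_left (#(symmDiff A B)ᶜ : ℝ) _ hp.ne']
  exact div_mem_Icc_of_abs_sub_lt_div_five hε hε3 (by positivity) (by positivity) hCS hS

theorem one_div_le_of_two_pow_le {η δ m t : ℝ} {k : ℕ} (hδ : 0 < δ)
    (hk : (2 : ℝ) ^ k ≤ η ^ 2 * δ * m / 2) (hmt : m ≤ t) :
    1 / (η ^ 2 * ((1 / 2) ^ k * t)) ≤ δ / 2 := by
  have h2k : (0 : ℝ) < 2 ^ k := by positivity
  have hm : 0 < η ^ 2 * m := by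
    by_contra! h
    nlinarith
  have ht : η ^ 2 * m ≤ η ^ 2 * t := mul_le_mul_of_nonneg_left hmt (sq_nonneg η)
  have hpow : η ^ 2 * ((1 / 2) ^ k * t) = η ^ 2 * t / 2 ^ k := by
    rw [one_div_pow]; ring
  rw [hpow, one_div_div, div_le_div_iff₀ (by linarith) two_pos]
  nlinarith

theorem card_inter_eq_sum_of_zero_or_one {ι : Type*} [DecidableEq ι] {x : ι → ℝ}
    {S : Finset ι} (h01 : ∀ i, x i = 0 ∨ x i = 1) (hS : ∀ i, i ∈ S ↔ x i = 1) (T : Finset ι) :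
    (#(T ∩ S) : ℝ) = ∑ i ∈ T, x i := by
  rw [← Finset.filter_mem_eq_inter, ← Finset.sum_boole]
  refine Finset.sum_congr rfl fun i _ => ?_
  rcases h01 i with h | h <;> simp [h, hS i]

section Probability

variable {Ω : Type*} [MeasurableSpace Ω] {μ : Measure Ω}

theorem memLp_two_of_zero_or_one [IsFiniteMeasure μ] {Y : Ω → ℝ} (hY : Measurable Y)
    (h01 : ∀ ω, Y ω = 0 ∨ Y ω = 1) : MemLp Y 2 μ :=
  MemLp.of_bound hY.aestronglyMeasurable 1
    (Filter.Eventually.of_forall fun ω => by rcases h01 ω with h | h <;> simp [h])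

theorem integral_of_zero_or_one {Y : Ω → ℝ} {p : ℝ} (hY : Measurable Y)
    (h01 : ∀ ω, Y ω = 0 ∨ Y ω = 1) (hq : μ {ω | Y ω = 1} = ENNReal.ofReal p) (hp : 0 ≤ p) :
    μ[Y] = p := by
  have hind : Y = Set.indicator {ω | Y ω = 1} 1 := by
    funext ω
    rcases h01 ω with h | h <;> simp [h]
  have hmeas1 : MeasurableSet {ω | Y ω = 1} := hY (measurableSet_singleton 1)
  rw [hind, integral_indicator_one hmeas1, measureReal_def, hq,
    ENNReal.toReal_ofReal hp]

theorem variance_of_zero_or_one [IsProbabilityMeasure μ] {Y : Ω → ℝ} {p : ℝ} (hY : Measurable Y)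
    (h01 : ∀ ω, Y ω = 0 ∨ Y ω = 1) (hq : μ {ω | Y ω = 1} = ENNReal.ofReal p) (hp : 0 ≤ p) :
    variance Y μ = p - p ^ 2 := by
  have hsq : Y ^ 2 = Y := by
    funext ω
    rcases h01 ω with h | h <;> simp [h]
  rw [variance_eq_sub (memLp_two_of_zero_or_one hY h01), hsq,
    integral_of_zero_or_one hY h01 hq hp]

variable {ι : Type*} [DecidableEq ι] {X : ι → Ω → ℝ} {p : ℝ}

theorem measure_le_abs_card_inter_sub_le [IsProbabilityMeasure μ]
    (hmeas : ∀ i, Measurable (X i)) (hindep : iIndepFun X μ) (h01 : ∀ i ω, X i ω = 0 ∨ X i ω = 1)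
    (hq : ∀ i, μ {ω | X i ω = 1} = ENNReal.ofReal p) (hp : 0 < p)
    {S : Ω → Finset ι} (hS : ∀ ω i, i ∈ S ω ↔ X i ω = 1)
    {T : Finset ι} (hT : T.Nonempty) {η : ℝ} (hη : 0 < η) :
    μ {ω | η * (p * #T) ≤ |(#(T ∩ S ω) : ℝ) - p * #T|}
      ≤ ENNReal.ofReal (1 / (η ^ 2 * (p * #T))) := by
  have hL2 : ∀ i, MemLp (X i) 2 μ := fun i => memLp_two_of_zero_or_one (hmeas i) (h01 i)
  have hsum : ∀ ω, (#(T ∩ S ω) : ℝ) = (∑ i ∈ T, X i) ω := fun ω => by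
    rw [Finset.sum_apply]
    exact card_inter_eq_sum_of_zero_or_one (h01 · ω) (hS ω) T
  have hmean : μ[∑ i ∈ T, X i] = p * #T := by
    simp only [Finset.sum_apply]
    rw [integral_finsetSum T fun i _ => (hL2 i).integrable one_le_two]
    simp [integral_of_zero_or_one (hmeas _) (h01 _) (hq _) hp.le, mul_comm]
  have hvar : variance (∑ i ∈ T, X i) μ = #T * (p - p ^ 2) := by
    rw [IndepFun.variance_sum (fun i _ => hL2 i) fun i _ j _ hij => hindep.indepFun hij]
    rw [Finset.sum_congr rfl fun i _ => variance_of_zero_or_one (hmeas i) (h01 i) (hq i) hp.le,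
      Finset.sum_const, nsmul_eq_mul]
  have hT0 : (0 : ℝ) < #T := by exact_mod_cast hT.card_pos
  have hcheb := meas_ge_le_variance_div_sq (μ := μ) (memLp_finsetSum' T fun i _ => hL2 i)
    (by positivity : 0 < η * (p * #T))
  rw [hmean, hvar] at hcheb
  simp only [← hsum] at hcheb
  refine hcheb.trans (ENNReal.ofReal_le_ofReal ?_)
  rw [div_le_div_iff₀ (by positivity) (by positivity)]
  nlinarith [pow_pos hp 2, pow_pos hη 2, pow_pos hT0 3]

theorem ofReal_one_sub_add_le_of_compl_union_subset [IsProbabilityMeasure μ] {s t u : Set Ω}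
    {a b : ℝ} (ha : 0 ≤ a) (hb : 0 ≤ b) (hs : μ s ≤ ENNReal.ofReal a)
    (ht : μ t ≤ ENNReal.ofReal b) (hu : (s ∪ t)ᶜ ⊆ u) :
    ENNReal.ofReal (1 - (a + b)) ≤ μ u := calc
  ENNReal.ofReal (1 - (a + b)) = 1 - ENNReal.ofReal (a + b) := by
    rw [ENNReal.ofReal_sub 1 (add_nonneg ha hb), ENNReal.ofReal_one]
  _ ≤ μ (s ∪ t)ᶜ := by
    rw [tsub_le_iff_right, ← measure_univ (μ := μ)]
    calc μ Set.univ ≤ μ (s ∪ t)ᶜ + μ (s ∪ t)ᶜᶜ := measure_univ_le_add_compl _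
      _ ≤ μ (s ∪ t)ᶜ + ENNReal.ofReal (a + b) := by
        rw [compl_compl, ENNReal.ofReal_add ha hb]
        gcongr
        exact (measure_union_le s t).trans (add_le_add hs ht)
  _ ≤ μ u := measure_mono hu

end Probability

theorem sampled_hamming_approx_general
    (ε δ r : ℝ) (hε : 0 < ε) (hε1 : ε < 1) (hδ : 0 < δ)
    (hr : 0 < r)
    {U : Type*} [Fintype U] [DecidableEq U] (d : ℕ) (hd : Fintype.card U = d)
    (A B : Finset U)
    (hsim : r ≤ hammingSimOn (Finset.univ : Finset U) A B)
    (k : ℕ)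
    {Ω : Type*} [MeasurableSpace Ω] (μ : Measure Ω) [IsProbabilityMeasure μ]
    (X : U → Ω → ℝ) (hmeas : ∀ i, Measurable (X i))
    (hindep : iIndepFun X μ)
    (h01 : ∀ i ω, X i ω = 0 ∨ X i ω = 1)
    (hq : ∀ i, μ {ω | X i ω = 1} = ENNReal.ofReal ((1 / 2 : ℝ) ^ k))
    (Sk : Ω → Finset U) (hSk : ∀ ω i, i ∈ Sk ω ↔ X i ω = 1)
    (hk : (2 : ℝ) ^ k ≤ (ε / 5) ^ 2 * δ * r * (d : ℝ) / 2) :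
    ENNReal.ofReal (1 - 2 * δ)
      ≤ μ {ω | (1 - ε) * hammingSimOn (Finset.univ : Finset U) A B
              ≤ hammingSimOn (Sk ω) (A ∩ Sk ω) (B ∩ Sk ω)
            ∧ hammingSimOn (Sk ω) (A ∩ Sk ω) (B ∩ Sk ω)
              ≤ (1 + ε) * hammingSimOn (Finset.univ : Finset U) A B} := by
  subst hd
  set p : ℝ := (1 / 2) ^ k
  set C : Finset U := (symmDiff A B)ᶜ
  have hd0 : (0 : ℝ) < Fintype.card U := by
    by_contra! h
    have : 0 < (ε / 5) ^ 2 * δ * r := by positivity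
    nlinarith [pow_pos (two_pos : (0 : ℝ) < 2) k]
  have : Nonempty U := Fintype.card_pos_iff.mp (by exact_mod_cast hd0)
  have hrC : r * Fintype.card U ≤ #C := by rwa [hammingSimOn_univ, le_div_iff₀ hd0] at hsim
  have hCd : (#C : ℝ) ≤ Fintype.card U := by exact_mod_cast Finset.card_le_univ C
  set bad : Finset U → Set Ω := fun T => {ω | ε / 5 * (p * #T) ≤ |(#(T ∩ Sk ω) : ℝ) - p * #T|}
  have hbad : ∀ T : Finset U, r * Fintype.card U ≤ #T → μ (bad T) ≤ ENNReal.ofReal (δ / 2) :=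
    fun T hT => (measure_le_abs_card_inter_sub_le hmeas hindep h01 hq (by positivity) hSk
      (Finset.card_pos.mp (by exact_mod_cast (mul_pos hr hd0).trans_le hT)) (by positivity)).trans
      (ENNReal.ofReal_le_ofReal (one_div_le_of_two_pow_le hδ (by linarith) hT))
  refine (ENNReal.ofReal_le_ofReal (by linarith)).trans
    (ofReal_one_sub_add_le_of_compl_union_subset (by positivity) (by positivity) (hbad C hrC)
      (hbad Finset.univ (by simpa using hrC.trans hCd)) fun ω hω => ?_)
  simp only [bad, Set.compl_union, Set.mem_inter_iff, Set.mem_compl_iff, Set.mem_ofPred_eq,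
    not_le, Finset.univ_inter, Finset.card_univ] at hω
  exact hammingSimOn_inter_mem_Icc_of_abs_sub_lt hε (by linarith) (by positivity)
    (by exact_mod_cast (mul_pos hr hd0).trans_le hrC) hω.1 hω.2

/-- subsampling preserves the Hamming similarity
`H(A,B) = 1 - |A△B|/d` up to a `(1±ε)` factor with probability at least `1 - 2δ`,
provided `H(A,B) ≥ r` and `2^k ≤ (ε/5)²·δ·r·d / 2`. Here `S_k = {i : X_i = 1}` for
independent Bernoulli(`2^{-k}`) variables `X_i`, `A_k = A ∩ S_k`, `B_k = B ∩ S_k`, and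
the sampled Hamming similarity is computed with respect to the universe `S_k`. -/
theorem sampled_hamming_approx
    (ε δ r : ℝ) (hε : 0 < ε) (hε1 : ε < 1) (hδ : 0 < δ) (hδ1 : δ < 1)
    (hr : 0 < r) (hr1 : r < 1)
    {U : Type*} [Fintype U] [DecidableEq U] (d : ℕ) (hd : Fintype.card U = d)
    (A B : Finset U)
    (hsim : r ≤ hammingSimOn (Finset.univ : Finset U) A B)
    (k : ℕ)
    {Ω : Type*} [MeasurableSpace Ω] (μ : Measure Ω) [IsProbabilityMeasure μ]
    (X : U → Ω → ℝ) (hmeas : ∀ i, Measurable (X i))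
    (hindep : iIndepFun X μ)
    (h01 : ∀ i ω, X i ω = 0 ∨ X i ω = 1)
    (hq : ∀ i, μ {ω | X i ω = 1} = ENNReal.ofReal ((1 / 2 : ℝ) ^ k))
    (Sk : Ω → Finset U) (hSk : ∀ ω i, i ∈ Sk ω ↔ X i ω = 1)
    (hk : (2 : ℝ) ^ k ≤ (ε / 5) ^ 2 * δ * r * (d : ℝ) / 2) :
    ENNReal.ofReal (1 - 2 * δ)
      ≤ μ {ω | (1 - ε) * hammingSimOn (Finset.univ : Finset U) A B
              ≤ hammingSimOn (Sk ω) (A ∩ Sk ω) (B ∩ Sk ω)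
            ∧ hammingSimOn (Sk ω) (A ∩ Sk ω) (B ∩ Sk ω)
              ≤ (1 + ε) * hammingSimOn (Finset.univ : Finset U) A B} :=
  sampled_hamming_approx_general ε δ r hε hε1 hδ hr d hd A B hsim k μ X hmeas hindep h01 hq Sk hSk
    hk
end
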